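/- Let W be a finite Coxeter group with longest element w₀. For any standard parabolic subgroup W_L with longest element w₀L, the element w₀L w₀ maps each v < w₀ w₀L outside W_L after left multiplication: for all v ∈ W with v < w₀ w₀L in the Bruhat order, w₀L w₀ v ∉ W_L. -/

import Mathlib

/-- Bruhat order on a Coxeter group, via the subword property: `u ≤ v` iff some
reduced word for `v` has a sublist whose product is `u`. -/
def CoxeterSystem.bruhatLE {B W : Type*} [Group W] {M : CoxeterMatrix B}
    (cs : CoxeterSystem M W) (u v : W) : Prop :=
  ∃ ω : List B, cs.IsReduced ω ∧ v = cs.wordProd ω ∧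
    ∃ ω' : List B, ω'.Sublist ω ∧ u = cs.wordProd ω'

/-- Strict Bruhat order. -/
def CoxeterSystem.bruhatLT {B W : Type*} [Group W] {M : CoxeterMatrix B}
    (cs : CoxeterSystem M W) (u v : W) : Prop :=
  cs.bruhatLE u v ∧ u ≠ v

/-- The standard parabolic subgroup generated by the simple reflections indexed by `L`. -/
def CoxeterSystem.parabolic {B W : Type*} [Group W] {M : CoxeterMatrix B}
    (cs : CoxeterSystem M W) (L : Set B) : Subgroup W :=
  Subgroup.closure (cs.simple '' L)

/-!
Because `ℓ (w₀ * x) + ℓ x = ℓ w₀` for every `x`, the strict Bruhat inequality `v < w₀ w₀L` gives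
`ℓ v < ℓ w₀ - ℓ w₀L`. If `w₀L w₀ v` lay in `W_L`, so would `w₀ v`, whence
`ℓ w₀ - ℓ v = ℓ (w₀ v) ≤ ℓ w₀L`, a contradiction.

The length formula for `w₀` comes from counting inversions. Let `η(w, t) ∈ ZMod 2` be the parity of
the number of occurrences of `t` in the right inversion sequence of a word for `w`. It does not
depend on the word, because `(t, ε) ↦ (w t w⁻¹, ε + η(w, t))` is an action of `W` on `W × ZMod 2`
(the relations hold since the inversion sequence of the word `(s i s j)^(m i j)` is periodic with
period `m i j`). Then the right inversions of `w` are the `t` with `η(w, t) = 1`, and there are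
`ℓ w` of them. Every reflection is a right inversion of `w₀`, so the cocycle identity
`η(w₀ x, t) = η(x, t) + η(w₀, x t x⁻¹)` makes the right inversions of `w₀ x` the complement of
those of `x`.
-/

namespace CoxeterSystem

theorem prod_map_alternatingWord_two_mul {B G : Type*} [Monoid G] (f : B → G) (i j : B)
    (m : ℕ) : ((alternatingWord i j (2 * m)).map f).prod = (f i * f j) ^ m := by
  induction m with
  | zero => simp [alternatingWord]
  | succ m ih =>
    rw [show 2 * (m + 1) = 2 * m + 1 + 1 by ring, alternatingWord_succ', alternatingWord_succ',
      if_neg (by simp [parity_simps]), if_pos (by simp), pow_succ', ← ih]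
    simp [mul_assoc]

theorem reverse_alternatingWord_two_mul {B : Type*} (i j : B) (m : ℕ) :
    (alternatingWord i j (2 * m)).reverse = alternatingWord j i (2 * m) := by
  induction m with
  | zero => rfl
  | succ m ih =>
    rw [show 2 * (m + 1) = 2 * m + 1 + 1 by ring, alternatingWord_succ', alternatingWord_succ',
      if_neg (by simp [parity_simps]), if_pos (by simp)]
    simp [alternatingWord_succ, ih]

variable {B W : Type*} [Group W] {M : CoxeterMatrix B} (cs : CoxeterSystem M W)

theorem wordProd_alternatingWord_add_two_mul (i j : B) (k : ℕ) :
    cs.wordProd (alternatingWord i j (k + 2 * M i j)) = cs.wordProd (alternatingWord i j k) := by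
  rw [prod_alternatingWord_eq_mul_pow, prod_alternatingWord_eq_mul_pow,
    show (k + 2 * M i j) / 2 = k / 2 + M i j by omega, pow_add, simple_mul_simple_pow, mul_one]
  simp [parity_simps]

theorem take_leftInvSeq_alternatingWord_eq_drop (i j : B) :
    (cs.leftInvSeq (alternatingWord i j (2 * M i j))).take (M i j) =
      (cs.leftInvSeq (alternatingWord i j (2 * M i j))).drop (M i j) := by
  apply List.ext_getElem (by simp; omega)
  intro k hk _
  simp only [List.length_take, length_leftInvSeq, length_alternatingWord] at hk
  rw [List.getElem_take, List.getElem_drop,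
    getElem_leftInvSeq_alternatingWord _ _ _ _ _ (by omega),
    getElem_leftInvSeq_alternatingWord _ _ _ _ _ (by omega),
    show 2 * (M i j + k) + 1 = 2 * k + 1 + 2 * M j i by rw [M.symmetric]; ring,
    wordProd_alternatingWord_add_two_mul]

theorem even_count_rightInvSeq_alternatingWord [DecidableEq W] (i j : B) (t : W) :
    Even ((cs.rightInvSeq (alternatingWord i j (2 * M i j))).count t) := by
  rw [← reverse_alternatingWord_two_mul, M.symmetric, rightInvSeq_reverse, List.count_reverse,
    ← List.take_append_drop (M j i) (cs.leftInvSeq _), List.count_append,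
    take_leftInvSeq_alternatingWord_eq_drop]
  exact ⟨_, rfl⟩

theorem simple_mul_mul_simple_eq_simple_iff (i : B) (t : W) :
    cs.simple i * t * cs.simple i = cs.simple i ↔ t = cs.simple i := by
  rw [mul_assoc, mul_eq_left, mul_eq_one_iff_eq_inv, inv_simple]

section FlipRepresentation

variable [DecidableEq W]

def simpleFlip (i : B) : Equiv.Perm (W × ZMod 2) :=
  Function.Involutive.toPerm
    (fun p ↦ (cs.simple i * p.1 * cs.simple i, p.2 + if p.1 = cs.simple i then 1 else 0))
    (by
      rintro ⟨t, ε⟩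
      refine Prod.ext (by simp [mul_assoc]) ?_
      simp only [simple_mul_mul_simple_eq_simple_iff]
      split_ifs <;> simp [add_assoc, CharTwo.add_self_eq_zero])

theorem simpleFlip_apply (i : B) (t : W) (ε : ZMod 2) :
    cs.simpleFlip i (t, ε) =
      (cs.simple i * t * cs.simple i, ε + if t = cs.simple i then 1 else 0) :=
  rfl

theorem prod_map_simpleFlip_apply (ω : List B) (t : W) (ε : ZMod 2) :
    (ω.map cs.simpleFlip).prod (t, ε) =
      (cs.wordProd ω * t * (cs.wordProd ω)⁻¹, ε + (cs.rightInvSeq ω).count t) := by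
  induction ω generalizing t ε with
  | nil => simp
  | cons i ω ih =>
    have hcond : cs.wordProd ω * t * (cs.wordProd ω)⁻¹ = cs.simple i ↔
        (cs.wordProd ω)⁻¹ * cs.simple i * cs.wordProd ω = t := by
      constructor <;> intro h <;> rw [← h] <;> group
    simp only [List.map_cons, List.prod_cons, Equiv.Perm.mul_apply, ih, simpleFlip_apply,
      rightInvSeq, List.count_cons, hcond, wordProd_cons, mul_inv_rev, inv_simple, beq_iff_eq,
      Prod.mk.injEq]
    constructor
    · group
    · push_cast
      ring

theorem isLiftable_simpleFlip : M.IsLiftable cs.simpleFlip := by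
  intro i j
  ext ⟨t, ε⟩ : 1
  have hprod : cs.wordProd (alternatingWord i j (2 * M i j)) = 1 := by
    simpa [alternatingWord] using cs.wordProd_alternatingWord_add_two_mul i j 0
  rw [← prod_map_alternatingWord_two_mul, prod_map_simpleFlip_apply, hprod,
    (ZMod.natCast_eq_zero_iff_even).mpr (cs.even_count_rightInvSeq_alternatingWord i j t)]
  simp

def flipRep : W →* Equiv.Perm (W × ZMod 2) :=
  cs.lift ⟨cs.simpleFlip, cs.isLiftable_simpleFlip⟩

def inversionParity (w t : W) : ZMod 2 :=
  (cs.flipRep w (t, 0)).2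

theorem flipRep_wordProd (ω : List B) :
    cs.flipRep (cs.wordProd ω) = (ω.map cs.simpleFlip).prod := by
  rw [wordProd, map_list_prod, List.map_map]
  congr 2
  ext1 i
  exact cs.lift_apply_simple cs.isLiftable_simpleFlip i

theorem inversionParity_wordProd (ω : List B) (t : W) :
    cs.inversionParity (cs.wordProd ω) t = (cs.rightInvSeq ω).count t := by
  simp [inversionParity, flipRep_wordProd, prod_map_simpleFlip_apply]

theorem flipRep_apply (w t : W) (ε : ZMod 2) :
    cs.flipRep w (t, ε) = (w * t * w⁻¹, ε + cs.inversionParity w t) := by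
  obtain ⟨ω, rfl⟩ := cs.wordProd_surjective w
  rw [flipRep_wordProd, prod_map_simpleFlip_apply, inversionParity_wordProd]

theorem inversionParity_mul (u v t : W) :
    cs.inversionParity (u * v) t = cs.inversionParity v t + cs.inversionParity u (v * t * v⁻¹) := by
  have h : cs.flipRep (u * v) (t, 0) = cs.flipRep u (cs.flipRep v (t, 0)) := by
    rw [map_mul, Equiv.Perm.mul_apply]
  simp only [flipRep_apply, zero_add, Prod.mk.injEq] at h
  exact h.2

theorem inversionParity_one (t : W) : cs.inversionParity 1 t = 0 := by
  simpa using cs.inversionParity_wordProd [] t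

theorem inversionParity_simple_self (i : B) :
    cs.inversionParity (cs.simple i) (cs.simple i) = 1 := by
  simpa using cs.inversionParity_wordProd [i] (cs.simple i)

theorem IsReflection.inversionParity_self {t : W} (ht : cs.IsReflection t) :
    cs.inversionParity t t = 1 := by
  obtain ⟨x, i, rfl⟩ := ht
  have hconj : x⁻¹ * (x * cs.simple i * x⁻¹) * x⁻¹⁻¹ = cs.simple i := by group
  have hx := cs.inversionParity_mul x x⁻¹ (x * cs.simple i * x⁻¹)
  rw [mul_inv_cancel, inversionParity_one, hconj] at hx
  rw [inversionParity_mul, hconj, cs.inversionParity_mul x (cs.simple i),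
    inversionParity_simple_self, mul_inv_cancel_right]
  linear_combination -hx

theorem mem_rightInvSeq_of_inversionParity_eq_one {ω : List B} {t : W}
    (h : cs.inversionParity (cs.wordProd ω) t = 1) : t ∈ cs.rightInvSeq ω := by
  rw [← List.count_pos_iff, Nat.pos_iff_ne_zero]
  rintro h0
  rw [inversionParity_wordProd, h0, Nat.cast_zero] at h
  exact zero_ne_one h

theorem isRightInversion_of_inversionParity_eq_one {w t : W} (h : cs.inversionParity w t = 1) :
    cs.IsRightInversion w t := by
  obtain ⟨ω, hω, rfl⟩ := cs.exists_isReduced w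
  exact cs.isRightInversion_of_mem_rightInvSeq hω (cs.mem_rightInvSeq_of_inversionParity_eq_one h)

theorem isRightInversion_iff_inversionParity_eq_one {w t : W} :
    cs.IsRightInversion w t ↔ cs.inversionParity w t = 1 := by
  refine ⟨fun h ↦ ?_, cs.isRightInversion_of_inversionParity_eq_one⟩
  by_contra hne
  have h0 : cs.inversionParity w t = 0 := by
    generalize cs.inversionParity w t = a at hne
    revert a
    decide
  -- Otherwise `t` would also be a right inversion of `w * t`, which is shorter than `w`.
  have hwt : cs.IsRightInversion (w * t) t := by
    apply cs.isRightInversion_of_inversionParity_eq_one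
    rw [inversionParity_mul, mul_inv_cancel_right, h0, h.1.inversionParity_self, add_zero]
  have hlt := hwt.2
  rw [mul_assoc, h.1.mul_self, mul_one] at hlt
  exact lt_asymm h.2 hlt

end FlipRepresentation

theorem setOf_isRightInversion_wordProd {ω : List B} (hω : cs.IsReduced ω) :
    {t | cs.IsRightInversion (cs.wordProd ω) t} = {t | t ∈ cs.rightInvSeq ω} := by
  classical
  ext t
  exact ⟨fun h ↦ cs.mem_rightInvSeq_of_inversionParity_eq_one
    (cs.isRightInversion_iff_inversionParity_eq_one.mp h),
    cs.isRightInversion_of_mem_rightInvSeq hω⟩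

theorem finite_setOf_isRightInversion (w : W) : {t | cs.IsRightInversion w t}.Finite := by
  obtain ⟨ω, hω, rfl⟩ := cs.exists_isReduced w
  rw [cs.setOf_isRightInversion_wordProd hω]
  exact (cs.rightInvSeq ω).finite_toSet

theorem length_eq_ncard_setOf_isRightInversion (w : W) :
    cs.length w = {t | cs.IsRightInversion w t}.ncard := by
  classical
  obtain ⟨ω, hω, rfl⟩ := cs.exists_isReduced w
  rw [cs.setOf_isRightInversion_wordProd hω, ← List.coe_toFinset, Set.ncard_coe_finset,
    List.toFinset_card_of_nodup hω.nodup_rightInvSeq, length_rightInvSeq, hω.eq]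

theorem isRightInversion_of_forall_length_le {w₀ t : W} (hw₀ : ∀ w, cs.length w ≤ cs.length w₀)
    (ht : cs.IsReflection t) : cs.IsRightInversion w₀ t :=
  ⟨ht, (hw₀ _).lt_of_ne (ht.length_mul_left_ne w₀)⟩

theorem isRightInversion_mul_iff_of_forall_length_le {w₀ : W}
    (hw₀ : ∀ w, cs.length w ≤ cs.length w₀) (x t : W) :
    cs.IsRightInversion (w₀ * x) t ↔ cs.IsReflection t ∧ ¬cs.IsRightInversion x t := by
  classical
  by_cases ht : cs.IsReflection t
  · have hw₀t : cs.inversionParity w₀ (x * t * x⁻¹) = 1 :=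
      cs.isRightInversion_iff_inversionParity_eq_one.mp
        (cs.isRightInversion_of_forall_length_le hw₀ (ht.conj x))
    rw [isRightInversion_iff_inversionParity_eq_one, isRightInversion_iff_inversionParity_eq_one,
      inversionParity_mul, hw₀t, and_iff_right ht]
    generalize cs.inversionParity x t = a
    revert a
    decide
  · exact iff_of_false (fun h ↦ ht h.1) (fun h ↦ ht h.1)

theorem length_mul_add_length_of_forall_length_le {w₀ : W}
    (hw₀ : ∀ w, cs.length w ≤ cs.length w₀) (x : W) :
    cs.length (w₀ * x) + cs.length x = cs.length w₀ := by
  have hunion : {t | cs.IsRightInversion (w₀ * x) t} ∪ {t | cs.IsRightInversion x t} =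
      {t | cs.IsRightInversion w₀ t} := by
    ext t
    have hx : cs.IsRightInversion x t → cs.IsReflection t := fun h ↦ h.1
    have hw₀t : cs.IsRightInversion w₀ t ↔ cs.IsReflection t :=
      ⟨fun h ↦ h.1, cs.isRightInversion_of_forall_length_le hw₀⟩
    simp only [Set.mem_union, Set.mem_ofPred_eq,
      cs.isRightInversion_mul_iff_of_forall_length_le hw₀, hw₀t]
    tauto
  have hdisj : Disjoint {t | cs.IsRightInversion (w₀ * x) t} {t | cs.IsRightInversion x t} :=
    Set.disjoint_left.mpr fun _ h h' ↦
      ((cs.isRightInversion_mul_iff_of_forall_length_le hw₀ x _).mp h).2 h'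
  rw [length_eq_ncard_setOf_isRightInversion, length_eq_ncard_setOf_isRightInversion,
    length_eq_ncard_setOf_isRightInversion, ← hunion,
    Set.ncard_union_eq hdisj (cs.finite_setOf_isRightInversion _)
      (cs.finite_setOf_isRightInversion _)]

theorem length_lt_length_of_bruhatLT {u v : W} (h : cs.bruhatLT u v) :
    cs.length u < cs.length v := by
  obtain ⟨⟨ω, hω, rfl, ω', hsub, rfl⟩, hne⟩ := h
  refine (cs.length_wordProd_le ω').trans_lt (hω.eq ▸ ?_)
  refine hsub.length_le.lt_of_ne fun hlen ↦ hne ?_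
  rw [hsub.eq_of_length hlen]

end CoxeterSystem

theorem w0L_w0_mul_not_mem_general {B W : Type*} [Group W] {M : CoxeterMatrix B}
    (cs : CoxeterSystem M W) (w₀ : W) (hw₀ : ∀ w : W, cs.length w ≤ cs.length w₀)
    (L : Set B) (w₀L : W) (hw₀Lmem : w₀L ∈ cs.parabolic L)
    (hw₀L : ∀ w ∈ cs.parabolic L, cs.length w ≤ cs.length w₀L) :
    ∀ v : W, cs.bruhatLT v (w₀ * w₀L) → w₀L * w₀ * v ∉ cs.parabolic L := by
  intro v hv hmem
  have hlt := cs.length_lt_length_of_bruhatLT hv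
  have hw₀v : w₀ * v ∈ cs.parabolic L := by
    simpa [mul_assoc] using mul_mem (inv_mem hw₀Lmem) hmem
  have hle := hw₀L _ hw₀v
  have hv_len := cs.length_mul_add_length_of_forall_length_le hw₀ v
  have hw₀L_len := cs.length_mul_add_length_of_forall_length_le hw₀ w₀L
  omega

/-- For all `v < w₀ w₀L` in the Bruhat order, `w₀L w₀ v ∉ W_L`. -/
theorem w0L_w0_mul_not_mem {B W : Type*} [Group W] [Finite W] {M : CoxeterMatrix B}
    (cs : CoxeterSystem M W) (w₀ : W) (hw₀ : ∀ w : W, cs.length w ≤ cs.length w₀)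
    (L : Set B) (w₀L : W) (hw₀Lmem : w₀L ∈ cs.parabolic L)
    (hw₀L : ∀ w ∈ cs.parabolic L, cs.length w ≤ cs.length w₀L) :
    ∀ v : W, cs.bruhatLT v (w₀ * w₀L) → w₀L * w₀ * v ∉ cs.parabolic L :=
  w0L_w0_mul_not_mem_general cs w₀ hw₀ L w₀L hw₀Lmem hw₀L
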